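/- arXiv:1812.09880 — 9 statements merged into one kernel-verified Lean document; each statement's English description precedes it below -/
import Mathlib

section
/- Let U be a finite set and let ν, τ be functions from subsets of U to the nonnegative reals such that ν is decreasing (A ⊆ B implies ν(A) ≥ ν(B)), τ is sub-additive (τ(A ∪ B) ≤ τ(A) + τ(B) for all A, B ⊆ U), and τ(∅) = 0. Let A* ⊆ U and set τ* = τ(A*), ν* = ν(A*), opt = τ* + ν*, and assume τ* > 0. Let ∅ = A₀ ⊆ A₁ ⊆ ⋯ ⊆ A_ℓ ⊆ U be a chain with ν(A₀) ≥ opt ≥ ν(A_ℓ) and ν(A_{i−1}) > ν(A_i) for each i = 1,…,ℓ, and suppose that for each i, with B_i = A_i ∖ A_{i−1}, the density condition τ(B_i) ≤ min{1, τ*/(ν(A_{i−1}) − ν*)} · (ν(A_{i−1}) − ν(A_i)) holds. Then τ(A_ℓ) + ν(A_ℓ) ≤ opt · (1 + (τ*/opt) · ln((ν(∅) − ν*)/τ*)). -/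
noncomputable def gfun (t x : ℝ) : ℝ := if x ≤ t then x else t * (1 + Real.log (x / t))

lemma gfun_eq_of_le (t x : ℝ) (ht : 0 < t) (hx : t ≤ x) :
    gfun t x = t * (1 + Real.log (x / t)) := by
  unfold gfun
  rcases eq_or_lt_of_le hx with h | h
  · rw [if_pos h.ge, ← h, div_self ht.ne', Real.log_one]; ring
  · rw [if_neg (not_le.mpr h)]

lemma gfun_key (t a b : ℝ) (ht : 0 < t) (hab : b ≤ a) :
    min 1 (t / a) * (a - b) ≤ gfun t a - gfun t b := by
  unfold gfun
  rcases le_or_gt a t with ha | ha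
  · rw [if_pos ha, if_pos (hab.trans ha)]
    have h1 : min 1 (t / a) ≤ 1 := min_le_left _ _
    nlinarith [sub_nonneg.mpr hab]
  · rw [if_neg (not_le.mpr ha)]
    have ha0 : 0 < a := ht.trans ha
    have hmin : min 1 (t / a) = t / a := min_eq_right (by rw [div_le_one ha0]; linarith)
    rw [hmin]
    rcases le_or_gt b t with hb | hb
    · rw [if_pos hb]
      have hlog : 1 - t / a ≤ Real.log (a / t) := by
        have h1 : Real.log (t / a) ≤ t / a - 1 :=
          Real.log_le_sub_one_of_pos (div_pos ht ha0)
        have h2 : Real.log (a / t) = -Real.log (t / a) := by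
          rw [← Real.log_inv]; congr 1; rw [inv_div]
        linarith [h2 ▸ neg_le_neg h1]
      have hta : t / a ≤ 1 := by rw [div_le_one ha0]; linarith
      have key : b * (1 - t / a) ≤ t * Real.log (a / t) := by
        calc b * (1 - t / a) ≤ t * (1 - t / a) := by nlinarith
          _ ≤ t * Real.log (a / t) := by nlinarith
      have hexp : t / a * (a - b) = t - t / a * b := by field_simp
      have : t / a * b = b * (t / a) := by ring
      nlinarith [key]
    · rw [if_neg (not_le.mpr hb)]
      have hb0 : 0 < b := ht.trans hb
      have hlogd : Real.log (a / t) - Real.log (b / t) = Real.log (a / b) := by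
        rw [Real.log_div ha0.ne' ht.ne', Real.log_div hb0.ne' ht.ne',
          Real.log_div ha0.ne' hb0.ne']; ring
      have hlog : 1 - b / a ≤ Real.log (a / b) := by
        have h1 : Real.log (b / a) ≤ b / a - 1 :=
          Real.log_le_sub_one_of_pos (div_pos hb0 ha0)
        have h2 : Real.log (a / b) = -Real.log (b / a) := by
          rw [← Real.log_inv]; congr 1; rw [inv_div]
        linarith [h2 ▸ neg_le_neg h1]
      have hexp : t / a * (a - b) = t * (1 - b / a) := by field_simp
      have hrhs : t * (1 + Real.log (a / t)) - t * (1 + Real.log (b / t))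
          = t * Real.log (a / b) := by rw [← hlogd]; ring
      rw [hexp, hrhs]
      nlinarith

/-- Performance guarantee of the Greedy Algorithm for the Generalized Min-Covering
problem: `ν` is a nonnegative decreasing potential, `τ` a nonnegative sub-additive
payment with `τ ∅ = 0`, `Astar` an (optimal) solution with `τ* = τ Astar > 0`,
`ν* = ν Astar`, `opt = τ* + ν*`, and `A 0 = ∅ ⊆ A 1 ⊆ ⋯ ⊆ A ℓ` a chain whose
augmenting sets satisfy the Density Condition. -/
theorem greedy_generalized_min_covering
    {U : Type} [Fintype U] [DecidableEq U]
    (ν τ : Finset U → ℝ)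
    (hν_nonneg : ∀ B : Finset U, 0 ≤ ν B) (hτ_nonneg : ∀ B : Finset U, 0 ≤ τ B)
    (hν_dec : ∀ B C : Finset U, B ⊆ C → ν C ≤ ν B)
    (hτ_sub : ∀ B C : Finset U, τ (B ∪ C) ≤ τ B + τ C)
    (hτ_empty : τ ∅ = 0)
    (Astar : Finset U) (hτstar : 0 < τ Astar)
    (ℓ : ℕ) (A : ℕ → Finset U)
    (hA0 : A 0 = ∅)
    (hchain : ∀ i, i < ℓ → A i ⊆ A (i + 1))
    (hstart : τ Astar + ν Astar ≤ ν (A 0))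
    (hend : ν (A ℓ) ≤ τ Astar + ν Astar)
    (hstrict : ∀ i, i < ℓ → ν (A (i + 1)) < ν (A i))
    (hdens : ∀ i, i < ℓ →
      τ (A (i + 1) \ A i) ≤
        min 1 (τ Astar / (ν (A i) - ν Astar)) * (ν (A i) - ν (A (i + 1)))) :
    τ (A ℓ) + ν (A ℓ) ≤
      (τ Astar + ν Astar) *
        (1 + (τ Astar / (τ Astar + ν Astar)) *
          Real.log ((ν ∅ - ν Astar) / τ Astar)) := by
  set t := τ Astar with ht_def
  set n := ν Astar with hn_def
  set d : ℕ → ℝ := fun i => ν (A i) - n with hd_def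
  -- Step 1: τ (A ℓ) ≤ sum of payments of augmenting sets
  have step1 : ∀ k, k ≤ ℓ → τ (A k) ≤ ∑ i ∈ Finset.range k, τ (A (i + 1) \ A i) := by
    intro k hk
    induction k with
    | zero => simp [hA0, hτ_empty]
    | succ m ih =>
      have hm : m ≤ ℓ := Nat.le_of_succ_le hk
      have hmlt : m < ℓ := hk
      have hunion : A (m + 1) = A m ∪ (A (m + 1) \ A m) :=
        (Finset.union_sdiff_of_subset (hchain m hmlt)).symm
      rw [Finset.sum_range_succ]
      calc τ (A (m + 1)) = τ (A m ∪ (A (m + 1) \ A m)) := by rw [← hunion]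
        _ ≤ τ (A m) + τ (A (m + 1) \ A m) := hτ_sub _ _
        _ ≤ (∑ i ∈ Finset.range m, τ (A (i + 1) \ A i)) + τ (A (m + 1) \ A m) := by
            linarith [ih hm]
  -- Step 2: each payment bounded by potential drop
  have step2 : ∀ i, i < ℓ → τ (A (i + 1) \ A i) ≤ gfun t (d i) - gfun t (d (i + 1)) := by
    intro i hi
    have h1 := hdens i hi
    have h2 : gfun t (d i) - gfun t (d (i + 1)) ≥
        min 1 (t / d i) * (d i - d (i + 1)) :=
      gfun_key t (d i) (d (i + 1)) hτstar (by simp only [hd_def]; linarith [hstrict i hi])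
    have he : d i - d (i + 1) = ν (A i) - ν (A (i + 1)) := by simp [hd_def]
    have he2 : t / d i = t / (ν (A i) - n) := rfl
    calc τ (A (i + 1) \ A i) ≤ min 1 (t / (ν (A i) - n)) * (ν (A i) - ν (A (i + 1))) := h1
      _ = min 1 (t / d i) * (d i - d (i + 1)) := by rw [he, he2]
      _ ≤ gfun t (d i) - gfun t (d (i + 1)) := h2
  -- telescoping
  have step3 : ∑ i ∈ Finset.range ℓ, (gfun t (d i) - gfun t (d (i + 1)))
      = gfun t (d 0) - gfun t (d ℓ) :=
    Finset.sum_range_sub' (fun i => gfun t (d i)) ℓ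
  have hsum : τ (A ℓ) ≤ gfun t (d 0) - gfun t (d ℓ) := by
    calc τ (A ℓ) ≤ ∑ i ∈ Finset.range ℓ, τ (A (i + 1) \ A i) := step1 ℓ le_rfl
      _ ≤ ∑ i ∈ Finset.range ℓ, (gfun t (d i) - gfun t (d (i + 1))) :=
          Finset.sum_le_sum (fun i hi => step2 i (Finset.mem_range.mp hi))
      _ = gfun t (d 0) - gfun t (d ℓ) := step3
  have hd0 : d 0 = ν ∅ - n := by simp [hd_def, hA0]
  have hd0t : t ≤ d 0 := by
    have := hstart; simp only [hd_def]; rw [hA0] at this ⊢; linarith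
  have hg0 : gfun t (d 0) = t * (1 + Real.log ((ν ∅ - n) / t)) := by
    rw [gfun_eq_of_le t (d 0) hτstar hd0t, hd0]
  have hgl : gfun t (d ℓ) = d ℓ := by
    unfold gfun; rw [if_pos]; simp only [hd_def]; linarith
  have hdl : d ℓ = ν (A ℓ) - n := rfl
  have hopt : 0 < t + n := by linarith [hν_nonneg Astar]
  have hrhs : (t + n) * (1 + (t / (t + n)) * Real.log ((ν ∅ - n) / t))
      = (t + n) + t * Real.log ((ν ∅ - n) / t) := by
    field_simp
  rw [hrhs]
  have : τ (A ℓ) + ν (A ℓ) ≤ t * (1 + Real.log ((ν ∅ - n) / t)) - (ν (A ℓ) - n) + ν (A ℓ) := by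
    rw [← hg0]; linarith [hsum, hgl ▸ hdl ▸ hsum]
  calc τ (A ℓ) + ν (A ℓ) ≤ t * (1 + Real.log ((ν ∅ - n) / t)) - (ν (A ℓ) - n) + ν (A ℓ) := this
    _ = t + n + t * Real.log ((ν ∅ - n) / t) := by ring
end

section
/- Let τ* > 0 and ν* ≥ 0 be reals and let ν₀ > ν₁ > ⋯ > ν_ℓ ≥ ν* be reals satisfying ν₀ ≥ τ* + ν* ≥ ν_ℓ. Then Σ_{i=1}^{ℓ} min{1, τ*/(ν_{i−1} − ν*)} · (ν_{i−1} − ν_i) ≤ (τ* + ν* − ν_ℓ) + τ* · ln((ν₀ − ν*)/τ*). -/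
/-- The Darboux-sum estimate at the core of the analysis of the Greedy Algorithm
for the Generalized Min-Covering problem: the lower Darboux sum of the function
`f(ν) = min {1, τ*/(ν − ν*)}  (ν > τ* + ν*)`, `f(ν) = 1  (ν ≤ τ* + ν*)`
with respect to the partition `ν ℓ < ν (ℓ-1) < ⋯ < ν 0` is at most the integral
of `f` over `[ν ℓ, ν 0]`. -/
theorem darboux_sum_estimate
    (τstar νstar : ℝ) (hτ : 0 < τstar) (hν : 0 ≤ νstar)
    (ℓ : ℕ) (ν : ℕ → ℝ)
    (hdec : ∀ i, i < ℓ → ν (i + 1) < ν i)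
    (hlast : νstar ≤ ν ℓ)
    (h0 : τstar + νstar ≤ ν 0)
    (hℓ : ν ℓ ≤ τstar + νstar) :
    ∑ i ∈ Finset.range ℓ, min 1 (τstar / (ν i - νstar)) * (ν i - ν (i + 1)) ≤
      (τstar + νstar - ν ℓ) + τstar * Real.log ((ν 0 - νstar) / τstar) := by
  set c : ℝ := τstar + νstar with hc
  set F : ℝ → ℝ := fun x => τstar * Real.log (max x c - νstar) + min x c with hF
  -- monotonicity: ν ℓ ≤ ν j for j ≤ ℓ
  have hmono : ∀ j, j ≤ ℓ → ν ℓ ≤ ν j := by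
    intro j hj
    have H : ∀ k, j + k ≤ ℓ → ν (j + k) ≤ ν j := by
      intro k
      induction k with
      | zero => simp
      | succ n ih =>
        intro h
        have h1 : ν (j + n + 1) < ν (j + n) := hdec (j + n) (by omega)
        have h2 := ih (by omega)
        have : j + (n + 1) = j + n + 1 := by omega
        rw [this]
        linarith
    have := H (ℓ - j) (by omega)
    rwa [Nat.add_sub_cancel' hj] at this
  have step : ∀ i ∈ Finset.range ℓ,
      min 1 (τstar / (ν i - νstar)) * (ν i - ν (i + 1)) ≤ F (ν i) - F (ν (i + 1)) := by
    intro i hi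
    rw [Finset.mem_range] at hi
    set a := ν i with ha
    set b := ν (i + 1) with hb
    have hba : b < a := hdec i hi
    have hbν : νstar ≤ b := le_trans hlast (hmono (i + 1) (by omega))
    have haν : νstar < a := lt_of_le_of_lt hbν hba
    have hapos : 0 < a - νstar := by linarith
    set m := min 1 (τstar / (a - νstar)) with hm
    have hm1 : m ≤ 1 := min_le_left _ _
    have hm0 : 0 < m := lt_min one_pos (div_pos hτ hapos)
    have hmina : min b c ≤ min a c := min_le_min (le_of_lt hba) le_rfl
    have part2 : m * (min a c - min b c) ≤ min a c - min b c := by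
      nlinarith [sub_nonneg.mpr hmina]
    have part1 : m * (max a c - max b c) ≤
        τstar * (Real.log (max a c - νstar) - Real.log (max b c - νstar)) := by
      rcases le_or_gt a c with hac | hac
      · have h1 : max a c = c := max_eq_right hac
        have h2 : max b c = c := max_eq_right (by linarith)
        rw [h1, h2]
        simp
      · have h1 : max a c = a := max_eq_left (le_of_lt hac)
        set B := max b c - νstar with hB
        have hBpos : 0 < B := by
          have : τstar ≤ max b c - νstar := by
            have : c ≤ max b c := le_max_right _ _
            simp only [hc] at this ⊢
            linarith
          linarith
        have hBA : B ≤ a - νstar := by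
          have : max b c ≤ a := max_le (le_of_lt hba) (le_of_lt hac)
          simp only [hB]; linarith
        have hma : m = τstar / (a - νstar) := by
          apply min_eq_right
          rw [div_le_one hapos]
          simp only [hc] at hac
          linarith
        have hlog : Real.log (B / (a - νstar)) ≤ B / (a - νstar) - 1 :=
          Real.log_le_sub_one_of_pos (div_pos hBpos hapos)
        rw [Real.log_div (ne_of_gt hBpos) (ne_of_gt hapos)] at hlog
        rw [h1, hma]
        have hA : a - νstar > 0 := hapos
        rw [div_mul_eq_mul_div, div_le_iff₀ hA]
        have hdivB : B / (a - νstar) * (a - νstar) = B := by field_simp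
        have h2 : 1 - B / (a - νstar) ≤ Real.log (a - νstar) - Real.log B := by linarith
        have h3 := mul_le_mul_of_nonneg_right (mul_le_mul_of_nonneg_left h2 hτ.le) hA.le
        nlinarith [h3, hdivB]
    have hsum : (max a c - max b c) + (min a c - min b c) = a - b := by
      have h1 := max_add_min a c
      have h2 := max_add_min b c
      linarith
    calc m * (a - b) = m * (max a c - max b c) + m * (min a c - min b c) := by
          rw [← hsum]; ring
      _ ≤ τstar * (Real.log (max a c - νstar) - Real.log (max b c - νstar))
            + (min a c - min b c) := add_le_add part1 part2
      _ = F a - F b := by simp only [hF]; ring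
  have htel : ∑ i ∈ Finset.range ℓ, (F (ν i) - F (ν (i + 1))) = F (ν 0) - F (ν ℓ) :=
    Finset.sum_range_sub' (fun i => F (ν i)) ℓ
  have hbound := Finset.sum_le_sum step
  rw [htel] at hbound
  have hF0 : F (ν 0) = τstar * Real.log (ν 0 - νstar) + c := by
    simp only [hF]
    rw [max_eq_left h0, min_eq_right h0]
  have hFℓ : F (ν ℓ) = τstar * Real.log τstar + ν ℓ := by
    simp only [hF]
    rw [max_eq_right hℓ, min_eq_left hℓ]
    have : c - νstar = τstar := by simp [hc]
    rw [this]
  have hpos0 : 0 < ν 0 - νstar := by simp only [hc] at h0; linarith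
  have hlogdiv : Real.log ((ν 0 - νstar) / τstar) = Real.log (ν 0 - νstar) - Real.log τstar :=
    Real.log_div (ne_of_gt hpos0) (ne_of_gt hτ)
  rw [hF0, hFℓ] at hbound
  rw [hlogdiv]
  simp only [hc] at hbound ⊢
  linarith
end

section
/- For every real θ > 0, the supremum of the function f(x) = ln(θx)/(x + 1) over all real x ≥ 1/θ equals ω(θ), and it is attained at x = 1/ω(θ). -/
/-- For `θ > 0`, the supremum of `f(x) = ln (θ x) / (x + 1)` over `x ≥ 1/θ`
equals `ω(θ)` (the unique root in `(0, θ]` of `x + 1 = ln (θ / x)`), and it is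
attained at `x = 1 / ω(θ)`. -/
theorem sup_log_div (θ ω : ℝ) (hθ : 0 < θ)
    (hω : 0 < ω ∧ ω ≤ θ ∧ ω + 1 = Real.log (θ / ω)) :
    IsGreatest ((fun x : ℝ => Real.log (θ * x) / (x + 1)) '' {x : ℝ | 1 / θ ≤ x}) ω ∧
      Real.log (θ * (1 / ω)) / (1 / ω + 1) = ω := by
  obtain ⟨hω0, hωθ, heq⟩ := hω
  have hval : Real.log (θ * (1 / ω)) / (1 / ω + 1) = ω := by
    have h1 : θ * (1 / ω) = θ / ω := by ring
    rw [h1, ← heq]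
    field_simp
    ring
  refine ⟨⟨⟨1 / ω, ?_, hval⟩, ?_⟩, hval⟩
  · exact one_div_le_one_div_of_le hω0 hωθ
  · rintro y ⟨x, hx, rfl⟩
    simp only [Set.mem_setOf_eq] at hx
    have hx0 : 0 < x := lt_of_lt_of_le (by positivity) hx
    have hx1 : 0 < x + 1 := by linarith
    rw [div_le_iff₀ hx1]
    have hωx : 0 < ω * x := by positivity
    have hsplit : Real.log (θ * x) = Real.log (θ / ω) + Real.log (ω * x) := by
      rw [← Real.log_mul (by positivity) (by positivity)]
      congr 1
      field_simp
    have hle : Real.log (ω * x) ≤ ω * x - 1 := Real.log_le_sub_one_of_pos hωx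
    rw [hsplit, ← heq]
    nlinarith
end

section
/- For every real θ > 0, the number α = θ/ω(θ) satisfies α > 1 and α·ln α = α + θ, and the supremum of the function x ↦ θ·ln(x)/(x + θ) over all real x ≥ 1 equals θ/α = ω(θ), attained at x = α. -/
/-- For `θ > 0` and `ω = ω(θ)` the unique root in `(0, θ]` of `x + 1 = ln (θ / x)`,
the number `α = θ / ω` satisfies `α > 1` and `α ln α = α + θ`, and the supremum
of `x ↦ θ ln x / (x + θ)` over `x ≥ 1` equals `θ / α = ω`, attained at `x = α`. -/
theorem sup_theta_log (θ ω : ℝ) (hθ : 0 < θ)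
    (hω : 0 < ω ∧ ω ≤ θ ∧ ω + 1 = Real.log (θ / ω)) :
    1 < θ / ω ∧
    (θ / ω) * Real.log (θ / ω) = θ / ω + θ ∧
    IsGreatest ((fun x : ℝ => θ * Real.log x / (x + θ)) '' {x : ℝ | 1 ≤ x}) (θ / (θ / ω)) ∧
    θ * Real.log (θ / ω) / (θ / ω + θ) = θ / (θ / ω) ∧
    θ / (θ / ω) = ω := by
  obtain ⟨hω0, hωθ, heq⟩ := hω
  have hα : 0 < θ / ω := div_pos hθ hω0
  have hlog : Real.log (θ / ω) = ω + 1 := heq.symm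
  have hα1 : 1 < θ / ω := by
    by_contra h
    push_neg at h
    have := Real.log_nonpos (le_of_lt hα) h
    rw [hlog] at this; linarith
  have hinv : θ / (θ / ω) = ω := by field_simp
  have hval : θ * Real.log (θ / ω) / (θ / ω + θ) = θ / (θ / ω) := by
    rw [hlog, hinv]
    rw [div_eq_iff (by positivity)]
    field_simp
    ring
  refine ⟨hα1, ?_, ⟨⟨θ / ω, le_of_lt hα1, hval⟩, ?_⟩, hval, hinv⟩
  · rw [hlog]; field_simp; ring
  · rintro y ⟨x, hx, rfl⟩
    simp only [Set.mem_setOf_eq] at hx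
    rw [hinv]
    have hx0 : 0 < x := lt_of_lt_of_le one_pos hx
    rw [div_le_iff₀ (by linarith)]
    -- log x ≤ log α + x/α - 1
    have key : Real.log (x / (θ / ω)) ≤ x / (θ / ω) - 1 :=
      Real.log_le_sub_one_of_pos (by positivity)
    rw [Real.log_div (ne_of_gt hx0) (ne_of_gt hα), hlog] at key
    have hxα : x / (θ / ω) = x * ω / θ := by field_simp
    rw [hxα] at key
    have : Real.log x ≤ ω + x * ω / θ := by linarith
    calc θ * Real.log x ≤ θ * (ω + x * ω / θ) := by nlinarith
      _ = ω * (x + θ) := by field_simp; ring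
end

section
/- lim_{θ → ∞} [ (1 + ω(θ)) − (ln θ − ln ln θ) ] = 0. -/
open Filter Real

/-- `lim_{θ → ∞} [(1 + ω(θ)) − (ln θ − ln ln θ)] = 0`, where for `θ > 0`,
`ω(θ)` is the unique root in `(0, θ]` of `x + 1 = ln (θ / x)`. -/
theorem omega_asymptotics (ω : ℝ → ℝ)
    (hω : ∀ θ : ℝ, 0 < θ →
      0 < ω θ ∧ ω θ ≤ θ ∧ ω θ + 1 = Real.log (θ / ω θ)) :
    Filter.Tendsto (fun θ : ℝ => (1 + ω θ) - (Real.log θ - Real.log (Real.log θ)))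
      Filter.atTop (nhds 0) := by
  -- key equation: for θ > 0, ω θ + 1 = log θ - log (ω θ)
  have key : ∀ θ : ℝ, 0 < θ → ω θ + 1 = Real.log θ - Real.log (ω θ) := by
    intro θ hθ
    obtain ⟨h1, _, h3⟩ := hω θ hθ
    rw [h3, Real.log_div (ne_of_gt hθ) (ne_of_gt h1)]
  -- ω tends to atTop
  have hgrow : Tendsto ω atTop atTop := by
    rw [tendsto_atTop]
    intro b
    set b' : ℝ := max b 1 with hb'
    have hb'pos : 0 < b' := lt_of_lt_of_le one_pos (le_max_right _ _)
    filter_upwards [eventually_ge_atTop (max 1 (b' * Real.exp (b' + 1)))] with θ hθ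
    have hθ1 : (1 : ℝ) ≤ θ := le_trans (le_max_left _ _) hθ
    have hθpos : 0 < θ := lt_of_lt_of_le one_pos hθ1
    have hθ2 : b' * Real.exp (b' + 1) ≤ θ := le_trans (le_max_right _ _) hθ
    have : b' ≤ ω θ := by
      by_contra h
      push_neg at h
      obtain ⟨hω1, _, _⟩ := hω θ hθpos
      have hlogθ : Real.log b' + (b' + 1) ≤ Real.log θ := by
        have := Real.log_le_log (by positivity) hθ2
        rwa [Real.log_mul (ne_of_gt hb'pos) (Real.exp_ne_zero _), Real.log_exp] at this
      have hlogω : Real.log (ω θ) < Real.log b' := Real.log_lt_log hω1 h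
      have := key θ hθpos
      nlinarith
    linarith [le_max_left b 1]
  -- log θ / ω θ → 1
  have h1 : Tendsto (fun θ => Real.log θ / ω θ) atTop (nhds 1) := by
    have hsmall : Tendsto (fun x : ℝ => (1 + Real.log x) / x) atTop (nhds 0) := by
      have hA : Tendsto (fun x : ℝ => x⁻¹) atTop (nhds 0) := tendsto_inv_atTop_zero
      have hB : Tendsto (fun x : ℝ => Real.log x / x) atTop (nhds 0) :=
        Real.isLittleO_log_id_atTop.tendsto_div_nhds_zero
      have hC := hA.add hB
      rw [add_zero] at hC
      refine hC.congr' ?_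
      filter_upwards [eventually_gt_atTop (0 : ℝ)] with x hx
      field_simp
    have hcomp : Tendsto (fun θ => (1 + Real.log (ω θ)) / ω θ) atTop (nhds 0) :=
      hsmall.comp hgrow
    have hC := hcomp.const_add 1
    rw [add_zero] at hC
    refine hC.congr' ?_
    filter_upwards [hgrow.eventually_gt_atTop 0, eventually_gt_atTop (0 : ℝ)] with θ hωθ hθ
    have hk := key θ hθ
    field_simp
    linarith
  -- conclude
  have hlog : Tendsto (fun θ => Real.log (Real.log θ / ω θ)) atTop (nhds 0) := by
    have := (Real.continuousAt_log one_ne_zero).tendsto.comp h1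
    rwa [Real.log_one] at this
  refine hlog.congr' ?_
  filter_upwards [eventually_ge_atTop (Real.exp 1), eventually_gt_atTop (0 : ℝ),
    hgrow.eventually_gt_atTop 0] with θ hθe hθ hωθ
  have hlogθ : (1 : ℝ) ≤ Real.log θ := by
    rw [← Real.log_exp 1]
    exact Real.log_le_log (Real.exp_pos 1) hθe
  rw [Real.log_div (by linarith) (ne_of_gt hωθ)]
  have hk := key θ hθ
  linarith
end

section
/- In any activation edge-cover instance, for every assignment a : V → ℝ≥0 there exists an assignment b : V → ℝ≥0 such that the assignment q + a + b is feasible and Σ_{v∈V} (q_v + a_v + b_v) ≤ Σ_{v∈V} q_v + Σ_{v∈V} a_v + Σ_{u ∈ R ∖ R_{q+a}} c_u, where R_{q+a} denotes the set of terminals that are an endpoint of some edge activated by the assignment q + a. Moreover, if q + a is itself feasible, then Σ_{v∈V} q_v + Σ_{v∈V} a_v + Σ_{u ∈ R ∖ R_{q+a}} c_u = Σ_{v∈V} q_v + Σ_{v∈V} a_v. -/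
/-- Edge `e` (with endpoints `ends e`) is incident to vertex `u`. -/
def Incident {V E : Type} (ends : E → V × V) (e : E) (u : V) : Prop :=
  (ends e).1 = u ∨ (ends e).2 = u

/-- Assignment `a` activates edge `e`: the value of `a` at each endpoint of `e`
is at least the threshold of `e` at that endpoint. -/
def Activates {V E : Type} (ends : E → V × V) (t1 t2 : E → ℝ) (a : V → ℝ) (e : E) : Prop :=
  t1 e ≤ a (ends e).1 ∧ t2 e ≤ a (ends e).2

/-- The threshold of edge `e` at vertex `u` (meaningful when `u` is an endpoint of `e`). -/
def thrAt {V E : Type} [DecidableEq V] (ends : E → V × V) (t1 t2 : E → ℝ)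
    (e : E) (u : V) : ℝ :=
  if (ends e).1 = u then t1 e else t2 e

/-- `a` is a feasible assignment for the activation edge-cover instance:
it is nonnegative, and every terminal is an endpoint of some activated edge. -/
def FeasibleAssign {V E : Type} (ends : E → V × V) (t1 t2 : E → ℝ)
    (R : Finset V) (a : V → ℝ) : Prop :=
  (∀ v, 0 ≤ a v) ∧ ∀ u ∈ R, ∃ e, Incident ends e u ∧ Activates ends t1 t2 a e

open Classical in
/-- Lemma 1 (equivalence lemma): for every assignment `a ≥ 0` there is `b ≥ 0`
such that `q + a + b` is feasible and
`Σ (q + a + b) ≤ Σ q + Σ a + Σ_{u ∈ R ∖ R_{q+a}} c u`;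
moreover, if `q + a` is itself feasible then the right-hand side equals `Σ q + Σ a`. -/
theorem equivalence_lemma {V E : Type} [Fintype V] [Fintype E] [DecidableEq V]
    (ends : E → V × V) (hdist : ∀ e, (ends e).1 ≠ (ends e).2)
    (t1 t2 : E → ℝ) (ht1 : ∀ e, 0 ≤ t1 e) (ht2 : ∀ e, 0 ≤ t2 e)
    (R : Finset V) (hR : ∀ u ∈ R, ∃ e, Incident ends e u)
    (q c : V → ℝ)
    (hq : ∀ u ∈ R,
      IsLeast {x : ℝ | ∃ e, Incident ends e u ∧ x = thrAt ends t1 t2 e u} (q u))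
    (hq0 : ∀ u, u ∉ R → q u = 0)
    (hc : ∀ u ∈ R,
      IsLeast {x : ℝ | ∃ e, Incident ends e u ∧ x = t1 e + t2 e} (q u + c u))
    (hc0 : ∀ u, u ∉ R → c u = 0)
    (a : V → ℝ) (ha : ∀ v, 0 ≤ a v) :
    (∃ b : V → ℝ, (∀ v, 0 ≤ b v) ∧
      FeasibleAssign ends t1 t2 R (fun v => q v + a v + b v) ∧
      ∑ v, (q v + a v + b v) ≤
        ∑ v, q v + ∑ v, a v +
          ∑ u ∈ R.filter (fun u =>
            ¬ ∃ e, Incident ends e u ∧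
              Activates ends t1 t2 (fun v => q v + a v) e), c u) ∧
    (FeasibleAssign ends t1 t2 R (fun v => q v + a v) →
      ∑ v, q v + ∑ v, a v +
          ∑ u ∈ R.filter (fun u =>
            ¬ ∃ e, Incident ends e u ∧
              Activates ends t1 t2 (fun v => q v + a v) e), c u =
        ∑ v, q v + ∑ v, a v) := by
  classical
  set S := R.filter (fun u =>
    ¬ ∃ e, Incident ends e u ∧ Activates ends t1 t2 (fun v => q v + a v) e) with hS
  have hqnn : ∀ v, 0 ≤ q v := by
    intro v
    by_cases hv : v ∈ R
    · obtain ⟨e, he, hqe⟩ := (hq v hv).1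
      rw [hqe]; unfold thrAt; split
      · exact ht1 e
      · exact ht2 e
    · rw [hq0 v hv]
  have hex : ∀ u : S, ∃ e, Incident ends e (u : V) ∧ q u + c u = t1 e + t2 e := by
    rintro ⟨u, hu⟩
    exact (hc u (Finset.mem_filter.mp hu).1).1
  let eu : S → E := fun u => (hex u).choose
  have heu : ∀ u : S, Incident ends (eu u) (u : V) ∧ q u + c u = t1 (eu u) + t2 (eu u) :=
    fun u => (hex u).choose_spec
  let D : S → V → ℝ := fun u v =>
    (if (ends (eu u)).1 = v then max (t1 (eu u) - q v - a v) 0 else 0) +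
    (if (ends (eu u)).2 = v then max (t2 (eu u) - q v - a v) 0 else 0)
  have hDnn : ∀ u v, 0 ≤ D u v := by
    intro u v
    apply add_nonneg <;> split_ifs <;> simp [le_max_right]
  set b : V → ℝ := fun v => ∑ u ∈ S.attach, D u v with hb
  have hbnn : ∀ v, 0 ≤ b v := fun v => Finset.sum_nonneg fun u _ => hDnn u v
  have hbD : ∀ (u : S) (v : V), D u v ≤ b v := by
    intro u v
    exact Finset.single_le_sum (f := fun u => D u v) (fun x _ => hDnn x v) (Finset.mem_attach _ u)
  -- key bound on the per-terminal deficit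
  have hDsum : ∀ u : S, ∑ v, D u v ≤ c (u : V) := by
    intro u
    obtain ⟨hinc, heq⟩ := heu u
    have huR : (u : V) ∈ R := (Finset.mem_filter.mp u.2).1
    have h1 : ∑ v, D u v =
        max (t1 (eu u) - q (ends (eu u)).1 - a (ends (eu u)).1) 0 +
        max (t2 (eu u) - q (ends (eu u)).2 - a (ends (eu u)).2) 0 := by
      unfold D
      rw [Finset.sum_add_distrib, Finset.sum_ite_eq, Finset.sum_ite_eq]
      simp
    rw [h1]
    rcases hinc with h | h
    · have hqle : q (u : V) ≤ t1 (eu u) := by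
        have := (hq u huR).2 ⟨eu u, Or.inl h, rfl⟩
        rwa [thrAt, if_pos h] at this
      have m1 : max (t1 (eu u) - q (ends (eu u)).1 - a (ends (eu u)).1) 0
          ≤ t1 (eu u) - q (u : V) := by
        apply max_le _ (by linarith)
        rw [h]
        linarith [ha (u : V)]
      have m2 : max (t2 (eu u) - q (ends (eu u)).2 - a (ends (eu u)).2) 0 ≤ t2 (eu u) := by
        apply max_le _ (ht2 _)
        linarith [ha (ends (eu u)).2, hqnn (ends (eu u)).2]
      linarith
    · have hqle : q (u : V) ≤ t2 (eu u) := by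
        have := (hq u huR).2 ⟨eu u, Or.inr h, rfl⟩
        rw [thrAt] at this
        rw [if_neg (fun hcc => hdist (eu u) (hcc.trans h.symm))] at this
        exact this
      have m2 : max (t2 (eu u) - q (ends (eu u)).2 - a (ends (eu u)).2) 0
          ≤ t2 (eu u) - q (u : V) := by
        apply max_le _ (by linarith)
        rw [h]
        linarith [ha (u : V)]
      have m1 : max (t1 (eu u) - q (ends (eu u)).1 - a (ends (eu u)).1) 0 ≤ t1 (eu u) := by
        apply max_le _ (ht1 _)
        linarith [ha (ends (eu u)).1, hqnn (ends (eu u)).1]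
      linarith
  constructor
  · refine ⟨b, hbnn, ⟨fun v => by dsimp only; have := hbnn v; have := ha v; have := hqnn v; linarith, ?_⟩, ?_⟩
    · -- feasibility of q + a + b
      intro u huR
      by_cases hu : (u : V) ∈ S
      · refine ⟨eu ⟨u, hu⟩, (heu ⟨u, hu⟩).1, ?_, ?_⟩
        · have := hbD ⟨u, hu⟩ (ends (eu ⟨u, hu⟩)).1
          have h2 : t1 (eu ⟨u, hu⟩) - q (ends (eu ⟨u, hu⟩)).1 - a (ends (eu ⟨u, hu⟩)).1
              ≤ D ⟨u, hu⟩ (ends (eu ⟨u, hu⟩)).1 := by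
            unfold D
            rw [if_pos rfl]
            have : (0:ℝ) ≤ if (ends (eu ⟨u, hu⟩)).2 = (ends (eu ⟨u, hu⟩)).1 then
                max (t2 (eu ⟨u, hu⟩) - q (ends (eu ⟨u, hu⟩)).1 - a (ends (eu ⟨u, hu⟩)).1) 0
                else 0 := by
              split_ifs <;> simp [le_max_right]
            linarith [le_max_left (t1 (eu ⟨u, hu⟩) - q (ends (eu ⟨u, hu⟩)).1 -
              a (ends (eu ⟨u, hu⟩)).1) (0:ℝ)]
          simp only []
          linarith
        · have := hbD ⟨u, hu⟩ (ends (eu ⟨u, hu⟩)).2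
          have h2 : t2 (eu ⟨u, hu⟩) - q (ends (eu ⟨u, hu⟩)).2 - a (ends (eu ⟨u, hu⟩)).2
              ≤ D ⟨u, hu⟩ (ends (eu ⟨u, hu⟩)).2 := by
            unfold D
            rw [if_pos rfl]
            have : (0:ℝ) ≤ if (ends (eu ⟨u, hu⟩)).1 = (ends (eu ⟨u, hu⟩)).2 then
                max (t1 (eu ⟨u, hu⟩) - q (ends (eu ⟨u, hu⟩)).2 - a (ends (eu ⟨u, hu⟩)).2) 0
                else 0 := by
              split_ifs <;> simp [le_max_right]
            linarith [le_max_left (t2 (eu ⟨u, hu⟩) - q (ends (eu ⟨u, hu⟩)).2 -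
              a (ends (eu ⟨u, hu⟩)).2) (0:ℝ)]
          simp only []
          linarith
      · have : ∃ e, Incident ends e u ∧ Activates ends t1 t2 (fun v => q v + a v) e := by
          by_contra hcon
          exact hu (Finset.mem_filter.mpr ⟨huR, hcon⟩)
        obtain ⟨e, hinc, hact⟩ := this
        refine ⟨e, hinc, ?_, ?_⟩
        · have := hact.1
          simp only [] at this ⊢
          linarith [hbnn (ends e).1]
        · have := hact.2
          simp only [] at this ⊢
          linarith [hbnn (ends e).2]
    · -- sum bound
      have hsum : ∑ v, (q v + a v + b v) = ∑ v, q v + ∑ v, a v + ∑ v, b v := by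
        rw [Finset.sum_add_distrib, Finset.sum_add_distrib]
      rw [hsum]
      have hbsum : ∑ v, b v ≤ ∑ u ∈ S, c u := by
        have : ∑ v, b v = ∑ u ∈ S.attach, ∑ v, D u v := by
          rw [Finset.sum_comm]
        rw [this]
        calc ∑ u ∈ S.attach, ∑ v, D u v ≤ ∑ u ∈ S.attach, c (u : V) :=
              Finset.sum_le_sum fun u _ => hDsum u
          _ = ∑ u ∈ S, c u := Finset.sum_attach S c
      linarith
  · intro hfeas
    have hSe : S = ∅ := by
      rw [hS]
      apply Finset.filter_false_of_mem
      intro u huR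
      simp only [not_not]
      exact hfeas.2 u huR
    rw [hSe, Finset.sum_empty, add_zero]
end

section
/- Consider an activation edge-cover instance in which R is an independent set, i.e., no edge of E has both endpoints in R. Let Δ be the maximum, over all vertices v ∈ V, of the number of terminals u ∈ R joined to v by an edge of E. If a : V → ℝ≥0 is an assignment such that q + a is feasible, then Σ_{u∈R} c_u ≤ Δ · Σ_{v∈V} a_v. -/
open Classical in
/-- If `R` is an independent set, `Δ` is the maximum over `v ∈ V` of the number
of terminals joined to `v` by an edge, and `q + a` is feasible, then
`Σ_{u ∈ R} c u ≤ Δ · Σ_{v ∈ V} a v`. -/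
theorem bipartite_c_bound {V E : Type} [Fintype V] [Fintype E] [DecidableEq V]
    (ends : E → V × V) (hdist : ∀ e, (ends e).1 ≠ (ends e).2)
    (t1 t2 : E → ℝ) (ht1 : ∀ e, 0 ≤ t1 e) (ht2 : ∀ e, 0 ≤ t2 e)
    (R : Finset V) (hR : ∀ u ∈ R, ∃ e, Incident ends e u)
    (hindep : ∀ e, ¬ ((ends e).1 ∈ R ∧ (ends e).2 ∈ R))
    (q c : V → ℝ)
    (hq : ∀ u ∈ R,
      IsLeast {x : ℝ | ∃ e, Incident ends e u ∧ x = thrAt ends t1 t2 e u} (q u))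
    (hq0 : ∀ u, u ∉ R → q u = 0)
    (hc : ∀ u ∈ R,
      IsLeast {x : ℝ | ∃ e, Incident ends e u ∧ x = t1 e + t2 e} (q u + c u))
    (hc0 : ∀ u, u ∉ R → c u = 0)
    (Δ : ℕ)
    (hΔ : Δ = Finset.univ.sup fun v : V =>
      (R.filter fun u => ∃ e, ends e = (u, v) ∨ ends e = (v, u)).card)
    (a : V → ℝ) (ha : ∀ v, 0 ≤ a v)
    (hfeas : FeasibleAssign ends t1 t2 R (fun v => q v + a v)) :
    ∑ u ∈ R, c u ≤ (Δ : ℝ) * ∑ v, a v := by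
  obtain ⟨hnn, hact⟩ := hfeas
  rcases R.eq_empty_or_nonempty with hRe | ⟨u0, hu0⟩
  · simp only [hRe, Finset.sum_empty]
    have : 0 ≤ ∑ v, a v := Finset.sum_nonneg fun v _ => ha v
    positivity
  -- key: each terminal has a "partner" outside R
  have key : ∀ u ∈ R, ∃ v, (∃ e, ends e = (u, v) ∨ ends e = (v, u)) ∧ v ∉ R ∧
      c u ≤ a u + a v := by
    intro u hu
    obtain ⟨e, hinc, hav1, hav2⟩ := hact u hu
    have hce : q u + c u ≤ t1 e + t2 e := (hc u hu).2 ⟨e, hinc, rfl⟩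
    rcases hinc with h1 | h2
    · refine ⟨(ends e).2, ⟨e, Or.inl ?_⟩, ?_, ?_⟩
      · rw [← h1]
      · intro hmem; exact hindep e ⟨h1 ▸ hu, hmem⟩
      · have hq2 : q (ends e).2 = 0 := by
          apply hq0; intro hmem; exact hindep e ⟨h1 ▸ hu, hmem⟩
        rw [h1] at hav1
        have hav1' : t1 e ≤ q u + a u := hav1
        have hav2' : t2 e ≤ q (ends e).2 + a (ends e).2 := hav2
        linarith
    · refine ⟨(ends e).1, ⟨e, Or.inr ?_⟩, ?_, ?_⟩
      · rw [← h2]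
      · intro hmem; exact hindep e ⟨hmem, h2 ▸ hu⟩
      · have hq1 : q (ends e).1 = 0 := by
          apply hq0; intro hmem; exact hindep e ⟨hmem, h2 ▸ hu⟩
        rw [h2] at hav2
        have hav2' : t2 e ≤ q u + a u := hav2
        have hav1' : t1 e ≤ q (ends e).1 + a (ends e).1 := hav1
        linarith
  -- choose the partner
  let f : V → V := fun u => if h : u ∈ R then (key u h).choose else u
  have hedge : ∀ u ∈ R, ∃ e, ends e = (u, f u) ∨ ends e = (f u, u) := by
    intro u hu; simp only [f, dif_pos hu]; exact ((key u hu).choose_spec).1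
  have hfnot : ∀ u ∈ R, f u ∉ R := by
    intro u hu; simp only [f, dif_pos hu]; exact ((key u hu).choose_spec).2.1
  have hcb : ∀ u ∈ R, c u ≤ a u + a (f u) := by
    intro u hu; simp only [f, dif_pos hu]; exact ((key u hu).choose_spec).2.2
  -- Δ ≥ 1
  have hΔ1 : 1 ≤ Δ := by
    obtain ⟨v0, ⟨e, he⟩, _, _⟩ := key u0 hu0
    have hmem : u0 ∈ R.filter fun u => ∃ e, ends e = (u, v0) ∨ ends e = (v0, u) :=
      Finset.mem_filter.2 ⟨hu0, e, he⟩
    calc 1 ≤ (R.filter fun u => ∃ e, ends e = (u, v0) ∨ ends e = (v0, u)).card :=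
          Finset.card_pos.2 ⟨u0, hmem⟩
      _ ≤ Δ := hΔ ▸ Finset.le_sup (f := fun v => (R.filter fun u => ∃ e, ends e = (u, v) ∨ ends e = (v, u)).card) (Finset.mem_univ v0)
  -- count bound
  have hcount : ∀ v : V, (R.filter fun u => f u = v).card ≤ Δ := by
    intro v
    have hsub : (R.filter fun u => f u = v) ⊆
        R.filter fun u => ∃ e, ends e = (u, v) ∨ ends e = (v, u) := by
      intro u hu
      obtain ⟨huR, hfv⟩ := Finset.mem_filter.1 hu
      exact Finset.mem_filter.2 ⟨huR, hfv ▸ hedge u huR⟩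
    calc (R.filter fun u => f u = v).card ≤ _ := Finset.card_le_card hsub
      _ ≤ Δ := hΔ ▸ Finset.le_sup (f := fun v => (R.filter fun u => ∃ e, ends e = (u, v) ∨ ends e = (v, u)).card) (Finset.mem_univ v)
  have hmaps : ∀ u ∈ R, f u ∈ Rᶜ := fun u hu => Finset.mem_compl.2 (hfnot u hu)
  have hsum2 : ∑ u ∈ R, a (f u) ≤ (Δ : ℝ) * ∑ v ∈ Rᶜ, a v := by
    rw [← Finset.sum_fiberwise_of_maps_to hmaps (fun u => a (f u)), Finset.mul_sum]
    apply Finset.sum_le_sum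
    intro v _
    calc ∑ u ∈ R.filter (fun u => f u = v), a (f u)
        = ∑ u ∈ R.filter (fun u => f u = v), a v := by
          apply Finset.sum_congr rfl
          intro u hu
          rw [(Finset.mem_filter.1 hu).2]
      _ = (R.filter fun u => f u = v).card * a v := by
          rw [Finset.sum_const, nsmul_eq_mul]
      _ ≤ (Δ : ℝ) * a v := by
          apply mul_le_mul_of_nonneg_right _ (ha v)
          exact_mod_cast hcount v
  have hsum1 : ∑ u ∈ R, a u ≤ (Δ : ℝ) * ∑ v ∈ R, a v := by
    apply le_mul_of_one_le_left (Finset.sum_nonneg fun v _ => ha v)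
    exact_mod_cast hΔ1
  calc ∑ u ∈ R, c u ≤ ∑ u ∈ R, (a u + a (f u)) := Finset.sum_le_sum hcb
    _ = ∑ u ∈ R, a u + ∑ u ∈ R, a (f u) := Finset.sum_add_distrib
    _ ≤ (Δ : ℝ) * ∑ v ∈ R, a v + (Δ : ℝ) * ∑ v ∈ Rᶜ, a v := add_le_add hsum1 hsum2
    _ = (Δ : ℝ) * ∑ v, a v := by rw [← mul_add, Finset.sum_add_sum_compl]
end

section
/- Let θ > 0 and t > 0 be reals, let w be a real with 0 ≤ w ≤ θ·t, and let k ≥ 1 be an integer. Then (w·H_k + k·t)/(w + k·t) ≤ 1 + (H_k − 1)/(1 + k/θ). -/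
/-- The `k`-th harmonic number `H k = ∑_{i=1}^{k} 1/i` (as a real number). -/
noncomputable def H (k : ℕ) : ℝ := ∑ i ∈ Finset.Icc 1 k, (1 : ℝ) / i

lemma one_le_H (k : ℕ) (hk : 1 ≤ k) : 1 ≤ H k := by
  unfold H
  calc (1 : ℝ) = ∑ i ∈ Finset.Icc 1 1, (1 : ℝ) / (i : ℕ) := by norm_num
    _ ≤ ∑ i ∈ Finset.Icc 1 k, (1 : ℝ) / (i : ℕ) := by
        apply Finset.sum_le_sum_of_subset_of_nonneg
        · exact Finset.Icc_subset_Icc_right hk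
        · intro i _ _; positivity

/-- For a star with `k ≥ 1` terminals of threshold `t > 0` and center of weight
`0 ≤ w ≤ θ t`: the quotient of the greedy payment `w H_k + k t` over the optimum
payment `w + k t` is at most `1 + (H_k − 1)/(1 + k/θ)`. -/
theorem star_payment_quotient (θ t w : ℝ) (hθ : 0 < θ) (ht : 0 < t)
    (hw0 : 0 ≤ w) (hw : w ≤ θ * t) (k : ℕ) (hk : 1 ≤ k) :
    (w * H k + (k : ℝ) * t) / (w + (k : ℝ) * t) ≤
      1 + (H k - 1) / (1 + (k : ℝ) / θ) := by
  have hk1 : (1 : ℝ) ≤ (k : ℝ) := by exact_mod_cast hk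
  have hkt : 0 < (k : ℝ) * t := by positivity
  have h1 : 0 < w + (k : ℝ) * t := by linarith
  have h2 : 0 < 1 + (k : ℝ) / θ := by positivity
  have hH : 1 ≤ H k := one_le_H k hk
  set d : ℝ := (H k - 1) / (1 + (k : ℝ) / θ) with hd
  have hdmul : d * (1 + (k : ℝ) / θ) = H k - 1 := div_mul_cancel₀ _ (ne_of_gt h2)
  have hd0 : 0 ≤ d := div_nonneg (by linarith) (le_of_lt h2)
  rw [div_le_iff₀ h1]
  have h3 : d * θ + d * (k : ℝ) = θ * (H k - 1) := by
    have := hdmul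
    field_simp at this ⊢
    linarith
  have hk0 : (0 : ℝ) ≤ (k : ℝ) := by positivity
  have hkey : 0 ≤ d * (k : ℝ) * (θ * t - w) :=
    mul_nonneg (mul_nonneg hd0 hk0) (by linarith)
  have hw3 : w * (d * θ + d * (k : ℝ)) = w * (θ * (H k - 1)) := by rw [h3]
  nlinarith [hkey, hw3, hθ, mul_pos hθ ht]
end

section
/- For every real θ > 0, sup over integers k ≥ 1 of (H_k − 1)/(1 + k/θ) is strictly less than ω(θ). -/
open Real Filter Topology

lemma H_one : H 1 = 1 := by simp [H]

lemma H_succ (k : ℕ) : H (k + 1) = H k + 1 / (k + 1) := by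
  rw [H, Finset.sum_Icc_succ_top (by omega), ← H]
  push_cast
  rfl

lemma H_le_log_add (k : ℕ) (hk : 2 ≤ k) : H k ≤ log k + (3 / 2 - log 2) := by
  induction k, hk using Nat.le_induction with
  | base =>
    rw [H_succ, H_one]
    norm_num
  | succ n hn ih =>
    have hn0 : (0 : ℝ) < n := by positivity
    have hstep : 1 / ((n : ℝ) + 1) ≤ log (n + 1) - log n := by
      have h := one_sub_inv_le_log_of_pos (x := ((n : ℝ) + 1) / n) (by positivity)
      rw [log_div (by positivity) hn0.ne', inv_div] at h
      calc 1 / ((n : ℝ) + 1) = 1 - n / (n + 1) := by field_simp; ring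
        _ ≤ _ := h
    rw [H_succ]
    push_cast
    linarith

lemma log_le_of_add_one_eq_log_div {θ ω a x : ℝ} (hθ : 0 < θ) (hω : 0 < ω)
    (hlog : ω + 1 = log (θ / ω)) (ha : 0 < a) (hx : 0 < x) :
    log x ≤ a * ω * (x / θ) + ω - log a := by
  have h := log_le_sub_one_of_pos (x := a * ω * (x / θ)) (by positivity)
  rw [log_mul (by positivity) (by positivity), log_mul ha.ne' hω.ne',
    log_div hx.ne' hθ.ne'] at h
  rw [log_div hθ.ne' hω.ne'] at hlog
  linarith

lemma exists_one_sub_mul_sub_log_lt (ω : ℝ) {c : ℝ} (hc : 0 < c) :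
    ∃ a ∈ Set.Ioo (0 : ℝ) 1, (1 - a) * ω - log a < c := by
  have hcont : ContinuousAt (fun a : ℝ => (1 - a) * ω - log a) 1 := by
    fun_prop (disch := norm_num)
  have hlim : Tendsto (fun a : ℝ => (1 - a) * ω - log a) (𝓝[<] 1) (𝓝 0) := by
    simpa using hcont.tendsto.mono_left nhdsWithin_le_nhds
  exact (Eventually.and (Ioo_mem_nhdsLT one_pos) (hlim.eventually (gt_mem_nhds hc))).exists

lemma H_sub_one_le {θ ω a : ℝ} (hθ : 0 < θ) (hω : 0 < ω) (hlog : ω + 1 = log (θ / ω))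
    (ha : 0 < a) (hgap : (1 - a) * ω - log a ≤ log 2 - 1 / 2) {k : ℕ} (hk : 1 ≤ k) :
    H k - 1 ≤ a * ω * (1 + k / θ) := by
  obtain rfl | hk2 := hk.eq_or_lt
  · rw [H_one, sub_self]
    positivity
  have hH := H_le_log_add k hk2
  have hlogk := log_le_of_add_one_eq_log_div (x := k) hθ hω hlog ha (by positivity)
  linarith

/-- For every `θ > 0`, `ω̄(θ) = sup_{k ≥ 1} (H k − 1)/(1 + k/θ)` is strictly less
than `ω(θ)`, the unique root in `(0, θ]` of `x + 1 = ln (θ / x)`. -/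
theorem omega_bar_lt_omega (θ ω : ℝ) (hθ : 0 < θ)
    (hω : 0 < ω ∧ ω ≤ θ ∧ ω + 1 = Real.log (θ / ω)) :
    sSup {y : ℝ | ∃ k : ℕ, 1 ≤ k ∧ y = (H k - 1) / (1 + (k : ℝ) / θ)} < ω := by
  obtain ⟨hω0, -, hlog⟩ := hω
  have hc : 0 < log 2 - 1 / 2 := by linarith [log_two_gt_d9]
  obtain ⟨a, ⟨ha0, ha1⟩, hgap⟩ := exists_one_sub_mul_sub_log_lt ω hc
  calc sSup {y : ℝ | ∃ k : ℕ, 1 ≤ k ∧ y = (H k - 1) / (1 + (k : ℝ) / θ)}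
      ≤ a * ω := by
        refine Real.sSup_le ?_ (by positivity)
        rintro _ ⟨k, hk, rfl⟩
        rw [div_le_iff₀ (by positivity)]
        exact H_sub_one_le hθ hω0 hlog ha0 hgap.le hk
    _ < ω := mul_lt_of_lt_one_left hω0 ha1
end
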